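/- For any standard Young tableau S of shape λ, the recording tableau obtained by applying RSK row insertion to the column reading word of S equals the fixed tableau Q_λ, defined by filling the first column of λ with 1,2,...,λ'_1 from bottom to top, the second column with λ'_1+1,...,λ'_1+λ'_2, and so on (where λ'_i is the length of the i-th column). In particular, this recording tableau depends only on λ, not on S. -/

import Mathlib

namespace RSKPaper

/-- The shape of a tableau: the list of row lengths (rows stored bottom-to-top,
French convention, so the shape is weakly decreasing). -/
def shape (T : List (List ℕ)) : List ℕ := T.map List.length

/-- The conjugate (transpose) of a partition given as a weakly decreasing list. -/
def conj (l : List ℕ) : List ℕ :=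
  (List.range (l.headD 0)).map (fun j => l.countP (fun x => decide (j < x)))

/-- A weakly decreasing list of positive integers. -/
def IsPartitionList (l : List ℕ) : Prop :=
  l.Pairwise (· ≥ ·) ∧ ∀ x ∈ l, 0 < x

/-- A standard Young tableau, rows stored bottom-to-top (French convention):
partition shape, rows strictly increasing, columns strictly increasing upwards,
and the entries are exactly 1,...,n. -/
def IsSYT (T : List (List ℕ)) : Prop :=
  IsPartitionList (shape T) ∧
  (∀ r ∈ T, r.Pairwise (· < ·)) ∧
  (∀ i j, i + 1 < T.length → j < (T.getD (i+1) []).length →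
    (T.getD i []).getD j 0 < (T.getD (i+1) []).getD j 0) ∧
  T.flatten.Perm (List.range' 1 T.flatten.length)

/-- Schensted row insertion of a single letter into a tableau. -/
def insertTab : List (List ℕ) → ℕ → List (List ℕ)
  | [], a => [[a]]
  | r :: rs, a =>
    match r.findIdx? (fun b => decide (a < b)) with
    | none => (r ++ [a]) :: rs
    | some i => (r.set i a) :: insertTab rs (r.getD i 0)

/-- The insertion tableau of a word. -/
def insertWord (w : List ℕ) : List (List ℕ) := w.foldl insertTab []

/-- The index of the row where the shape grew. -/
def growthRow (P P' : List (List ℕ)) : ℕ :=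
  (List.range P'.length).findIdx
    (fun i => decide ((P.getD i []).length ≠ (P'.getD i []).length))

/-- Add a box labelled `k` at the end of row `r` of the recording tableau. -/
def addBox (Q : List (List ℕ)) (r k : ℕ) : List (List ℕ) :=
  if r < Q.length then Q.set r (Q.getD r [] ++ [k]) else Q ++ [[k]]

def RSKaux : List ℕ → ℕ → List (List ℕ) × List (List ℕ) → List (List ℕ) × List (List ℕ)
  | [], _, pq => pq
  | a :: rest, k, (P, Q) =>
      let P' := insertTab P a
      RSKaux rest (k+1) (P', addBox Q (growthRow P P') k)

/-- The RSK correspondence: insertion and recording tableaux of a word. -/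
def RSK (w : List ℕ) : List (List ℕ) × List (List ℕ) := RSKaux w 1 ([], [])

/-- Row reading word: rows top to bottom, left to right. -/
def readingWord (T : List (List ℕ)) : List ℕ := T.reverse.flatten

/-- Column reading word: columns left to right, each read top to bottom. -/
def columnWord (T : List (List ℕ)) : List ℕ :=
  (List.range (T.headD []).length).flatMap
    (fun j => T.reverse.filterMap (fun row => row[j]?))

/-- Transpose of a tableau: column `j` (bottom to top) becomes row `j`. -/
def transposeTab (T : List (List ℕ)) : List (List ℕ) :=
  (List.range (T.headD []).length).map
    (fun j => T.filterMap (fun row => row[j]?))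

/-- The inverse of a permutation written as a word on 1,...,n. -/
def invWord (w : List ℕ) : List ℕ :=
  (List.range w.length).map (fun i => w.findIdx (fun x => decide (x = i+1)) + 1)

/-- Convert a list of columns (each bottom-to-top) into a list of `k` rows. -/
def rowsOfCols (cols : List (List ℕ)) (k : ℕ) : List (List ℕ) :=
  (List.range k).map (fun i => cols.filterMap (fun c => getElem? c i))

/-- The columns of the tableau `T_λ`: process the rows of `λ` from shortest to
longest; at each stage drop the next consecutive integers into the bottommost
empty cells of the first `λ_{k-t+1}` columns, left to right. -/
def colsOfT (l : List ℕ) : List (List ℕ) :=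
  (l.reverse.foldl
    (fun (st : List (List ℕ) × ℕ) len =>
      (st.1.mapIdx (fun j col => if j < len then col ++ [st.2 + j] else col), st.2 + len))
    ((List.replicate (l.headD 0) ([] : List ℕ)), 1)).1

/-- The tableau `T_λ` of Lemma 3.3. -/
def Tlam (l : List ℕ) : List (List ℕ) := rowsOfCols (colsOfT l) l.length

/-- The tableau `Q_λ`: columns filled consecutively with `1,…,n` from bottom to
top, left column first. -/
def Qlam (l : List ℕ) : List (List ℕ) :=
  rowsOfCols
    ((List.range (conj l).length).map (fun j =>
      (List.range ((conj l).getD j 0)).map (fun i => ((conj l).take j).sum + i + 1)))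
    l.length

/-- The map `f`: row reading word of the recording tableau. -/
def f (w : List ℕ) : List ℕ := readingWord (RSK w).2

/-- The map `c`: column reading word of the recording tableau. -/
def c (w : List ℕ) : List ℕ := columnWord (RSK w).2

/-- The map `r`: reversed row reading word of the recording tableau. -/
def r (w : List ℕ) : List ℕ := (readingWord (RSK w).2).reverse

/-- `s` is `k`-increasing: it contains no decreasing subsequence of length `k+1`. -/
def IsKIncreasing (k : ℕ) (s : List ℕ) : Prop :=
  ∀ d : List ℕ, d.Sublist s → d.Pairwise (· > ·) → d.length ≤ k

/-- `s` is `k`-decreasing: it contains no increasing subsequence of length `k+1`. -/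
def IsKDecreasing (k : ℕ) (s : List ℕ) : Prop :=
  ∀ d : List ℕ, d.Sublist s → d.Pairwise (· < ·) → d.length ≤ k

/-- `I_k(w)`: the maximum length of a `k`-increasing subsequence of `w`. -/
noncomputable def Ik (k : ℕ) (w : List ℕ) : ℕ :=
  sSup {m | ∃ s : List ℕ, s.Sublist w ∧ IsKIncreasing k s ∧ s.length = m}

/-- `D_k(w)`: the maximum length of a `k`-decreasing subsequence of `w`. -/
noncomputable def Dk (k : ℕ) (w : List ℕ) : ℕ :=
  sSup {m | ∃ s : List ℕ, s.Sublist w ∧ IsKDecreasing k s ∧ s.length = m}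

end RSKPaper

/-!
Let `c₁, …, cₘ` be the columns of `S`, each read bottom to top, so that the column word is
`c₁.reverse ++ ⋯ ++ cₘ.reverse`. Suppose the insertion tableau consists of the columns
`c₁, …, c_{j-1}` with the lowest entries `d` of `c_j` glued onto the ends of the bottom rows.
The next letter `a` of `c_j` is smaller than every entry of `d`, and larger than every entry of
`c₁, …, c_{j-1}` in the rows it meets (rows of `S` increase). So `a` lands at the end of the
bottom row and bumps `d₀` to the end of the next row, which bumps `d₁`, and so on: the cascade
shifts `d` up by one row and the new box appears in row `d.length`. Hence every column of `S` is
rebuilt in place, and the recording tableau is filled with consecutive labels up its columns,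
left to right, which is `Q_λ`.
-/

namespace RSKPaper

lemma ext_getD {α : Type*} {l l' : List α} (d : α) (hl : l.length = l'.length)
    (h : ∀ i < l.length, l.getD i d = l'.getD i d) : l = l' :=
  List.ext_getElem hl fun i h₁ h₂ => by
    simpa [List.getD_eq_getElem, h₁, h₂] using h i h₁

def glueColumn : List (List ℕ) → List ℕ → List (List ℕ)
  | B, [] => B
  | B, v :: d => (B.headD [] ++ [v]) :: glueColumn B.tail d

@[simp] lemma glueColumn_nil (B : List (List ℕ)) : glueColumn B [] = B := rfl

@[simp] lemma glueColumn_cons (B : List (List ℕ)) (v : ℕ) (d : List ℕ) :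
    glueColumn B (v :: d) = (B.headD [] ++ [v]) :: glueColumn B.tail d := rfl

lemma length_glueColumn (B : List (List ℕ)) (d : List ℕ) :
    (glueColumn B d).length = max B.length d.length := by
  induction d generalizing B with
  | nil => simp
  | cons v d ih => cases B <;> simp [ih]

lemma getD_glueColumn (B : List (List ℕ)) (d : List ℕ) (i : ℕ) :
    (glueColumn B d).getD i [] = B.getD i [] ++ d[i]?.toList := by
  induction d generalizing B i with
  | nil => simp
  | cons v d ih =>
    cases i with
    | zero => cases B <;> simp
    | succ i => cases B <;> simp only [glueColumn_cons, List.getD_cons_succ, List.tail_nil,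
        List.tail_cons, ih] <;> simp

def RowsLT (B : List (List ℕ)) (col : List ℕ) : Prop :=
  ∀ i (hi : i < col.length), ∀ x ∈ B.getD i [], x < col[i]

lemma RowsLT.tail {B : List (List ℕ)} {a : ℕ} {d : List ℕ} (h : RowsLT B (a :: d)) :
    RowsLT B.tail d := fun i hi x hx =>
  h (i + 1) (by simpa using hi) x (by cases B <;> simp_all)

lemma RowsLT.of_append {B : List (List ℕ)} {u v : List ℕ} (hs : (u ++ v).Pairwise (· < ·))
    (h : RowsLT B (u ++ v)) : RowsLT B v := by
  intro i hi x hx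
  have hx' := h i (by simp; omega) x hx
  rcases Nat.eq_zero_or_pos u.length with hu | hu
  · simpa [List.eq_nil_of_length_eq_zero hu] using hx'
  · have hlt := List.pairwise_iff_getElem.mp hs i (u.length + i) (by simp; omega) (by simp; omega)
      (by omega)
    simp only [List.getElem_append_right (Nat.le_add_right u.length i),
      Nat.add_sub_cancel_left] at hlt
    exact hx'.trans hlt

theorem insertTab_glueColumn (d : List ℕ) (B : List (List ℕ)) (a : ℕ)
    (hs : (a :: d).Pairwise (· < ·)) (hB : RowsLT B (a :: d)) :
    insertTab (glueColumn B d) a = glueColumn B (a :: d) := by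
  induction d generalizing B a with
  | nil =>
    rcases B with _ | ⟨r, B⟩
    · rfl
    · have hr : r.findIdx? (fun b => decide (a < b)) = none :=
        List.findIdx?_eq_none_iff.mpr fun x hx => by simpa using (hB 0 (by simp) x hx).le
      simp [insertTab, hr]
  | cons v d ih =>
    obtain ⟨hav, hs'⟩ : a < v ∧ (v :: d).Pairwise (· < ·) := by
      simp only [List.pairwise_cons] at hs ⊢; exact ⟨hs.1 v (by simp), hs.2⟩
    have hr : ∀ x ∈ B.headD [], x < a := fun x hx => hB 0 (by simp) x (by cases B <;> simp_all)
    have hfind : (B.headD [] ++ [v]).findIdx? (fun b => decide (a < b)) =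
        some (B.headD []).length := by
      rw [List.findIdx?_append,
        List.findIdx?_eq_none_iff.mpr (by simpa using fun x hx => (hr x hx).le)]
      simp [hav]
    have hset : (B.headD [] ++ [v]).set (B.headD []).length a = B.headD [] ++ [a] := by simp
    have hget : (B.headD [] ++ [v]).getD (B.headD []).length 0 = v := by simp
    rw [glueColumn_cons, insertTab, hfind]
    dsimp only
    rw [hset, hget, ih B.tail v hs' hB.tail]
    rfl

theorem growthRow_glueColumn (B : List (List ℕ)) (d : List ℕ) (a : ℕ) :
    growthRow (glueColumn B d) (glueColumn B (a :: d)) = d.length := by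
  have hlen : d.length < (List.range (glueColumn B (a :: d)).length).length := by
    simp [length_glueColumn]
  rw [growthRow, List.findIdx_eq hlen]
  refine ⟨by simp only [List.getElem_range, getD_glueColumn]; simp, fun j hj => ?_⟩
  have hj' : j < (a :: d).length := by simp; omega
  simp only [List.getElem_range, getD_glueColumn, List.getElem?_eq_getElem hj,
    List.getElem?_eq_getElem hj']
  simp

lemma addBox_cons_succ (r : List ℕ) (Q : List (List ℕ)) (m k : ℕ) :
    addBox (r :: Q) (m + 1) k = r :: addBox Q m k := by
  unfold addBox
  split_ifs <;> simp_all

theorem addBox_glueColumn (B : List (List ℕ)) (q : List ℕ) (k : ℕ) :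
    addBox (glueColumn B q) q.length k = glueColumn B (q ++ [k]) := by
  induction q generalizing B with
  | nil => cases B <;> simp [addBox]
  | cons v q ih => simp [addBox_cons_succ, ih]

theorem RSKaux_cons_glueColumn (a : ℕ) (rest d q : List ℕ) (n : ℕ) (B BQ : List (List ℕ))
    (hs : (a :: d).Pairwise (· < ·)) (hB : RowsLT B (a :: d)) (hq : q.length = d.length) :
    RSKaux (a :: rest) n (glueColumn B d, glueColumn BQ q) =
      RSKaux rest (n + 1) (glueColumn B (a :: d), glueColumn BQ (q ++ [n])) := by
  rw [RSKaux, insertTab_glueColumn d B a hs hB, growthRow_glueColumn, ← hq, addBox_glueColumn]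

theorem RSKaux_append_glueColumn (w d q rest : List ℕ) (n : ℕ) (B BQ : List (List ℕ))
    (hs : (w.reverse ++ d).Pairwise (· < ·)) (hB : RowsLT B (w.reverse ++ d))
    (hq : q.length = d.length) :
    RSKaux (w ++ rest) n (glueColumn B d, glueColumn BQ q) =
      RSKaux rest (n + w.length)
        (glueColumn B (w.reverse ++ d), glueColumn BQ (q ++ List.range' n w.length)) := by
  induction w generalizing d q n with
  | nil => simp
  | cons a w ih =>
    simp only [List.reverse_cons, List.append_assoc, List.singleton_append] at hs hB ⊢
    rw [List.cons_append, RSKaux_cons_glueColumn a _ d q n B BQ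
      (hs.sublist (List.sublist_append_right _ _)) (hB.of_append hs) hq,
      ih (a :: d) (q ++ [n]) (n + 1) hs hB (by simp [hq])]
    simp [List.range'_succ, Nat.add_comm 1, Nat.add_assoc]

theorem RSKaux_reverse_append {col : List ℕ} {B : List (List ℕ)} (hs : col.Pairwise (· < ·))
    (hB : RowsLT B col) (rest : List ℕ) (n : ℕ) (BQ : List (List ℕ)) :
    RSKaux (col.reverse ++ rest) n (B, BQ) =
      RSKaux rest (n + col.length)
        (glueColumn B col, glueColumn BQ (List.range' n col.length)) := by
  simpa using RSKaux_append_glueColumn col.reverse [] [] rest n B BQ (by simpa using hs)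
    (by simpa using hB) rfl

def ofColumns (cols : List (List ℕ)) : List (List ℕ) :=
  rowsOfCols cols (cols.headD []).length

lemma getD_rowsOfCols (cols : List (List ℕ)) {k i : ℕ} (h : i < k) :
    (rowsOfCols cols k).getD i [] = cols.filterMap (·[i]?) := by
  simp [rowsOfCols, h]

lemma mem_getD_ofColumns {cols : List (List ℕ)} {i x : ℕ}
    (hx : x ∈ (ofColumns cols).getD i []) :
    ∃ col ∈ cols, col[i]? = some x := by
  by_cases hi : i < (cols.headD []).length
  · rw [ofColumns, getD_rowsOfCols _ hi] at hx
    exact List.mem_filterMap.mp hx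
  · rw [List.getD_eq_default _ _ (by simpa [ofColumns, rowsOfCols] using hi)] at hx
    simp at hx

theorem ofColumns_append_singleton (cols : List (List ℕ)) (d : List ℕ)
    (h : ∀ col ∈ cols, d.length ≤ col.length) :
    ofColumns (cols ++ [d]) = glueColumn (ofColumns cols) d := by
  cases cols with
  | nil =>
    refine ext_getD [] (by simp [ofColumns, rowsOfCols, length_glueColumn]) fun i hi => ?_
    have hi' : i < d.length := by simpa [ofColumns, rowsOfCols] using hi
    simp only [List.nil_append, ofColumns, List.headD_cons, getD_glueColumn,
      getD_rowsOfCols _ hi']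
    cases h : d[i]? <;> simp [h, rowsOfCols]
  | cons col cols =>
    have hd := h col (by simp)
    refine ext_getD [] (by simp [ofColumns, rowsOfCols, length_glueColumn, hd]) fun i hi => ?_
    have hi' : i < col.length := by simpa [ofColumns, rowsOfCols] using hi
    simp only [ofColumns, List.cons_append, List.headD_cons, getD_glueColumn,
      getD_rowsOfCols _ hi']
    rw [← List.cons_append, List.filterMap_append]
    cases h : d[i]? <;> simp [h]

def ColumnLT (col₁ col₂ : List ℕ) : Prop :=
  col₂.length ≤ col₁.length ∧ ∀ i < col₂.length, col₁.getD i 0 < col₂.getD i 0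

lemma rowsLT_ofColumns {cols : List (List ℕ)} {col : List ℕ}
    (h : ∀ c₀ ∈ cols, ColumnLT c₀ col) :
    RowsLT (ofColumns cols) col := by
  intro i hi x hx
  obtain ⟨c₀, hc₀, hx₀⟩ := mem_getD_ofColumns hx
  have := (h c₀ hc₀).2 i hi
  rwa [List.getD_eq_getElem?_getD, hx₀, Option.getD_some, List.getD_eq_getElem _ _ hi] at this

def consecutiveBlocks : ℕ → List ℕ → List (List ℕ)
  | _, [] => []
  | n, k :: ks => List.range' n k :: consecutiveBlocks (n + k) ks

theorem RSKaux_flatMap_reverse (todo done qdone : List (List ℕ)) (n : ℕ)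
    (hs : ∀ col ∈ todo, col.Pairwise (· < ·)) (hpair : (done ++ todo).Pairwise ColumnLT)
    (hq : qdone.map List.length = done.map List.length) :
    RSKaux (todo.flatMap List.reverse) n (ofColumns done, ofColumns qdone) =
      (ofColumns (done ++ todo),
        ofColumns (qdone ++ consecutiveBlocks n (todo.map List.length))) := by
  induction todo generalizing done qdone n with
  | nil => simp [RSKaux, consecutiveBlocks]
  | cons col todo ih =>
    have hdone : ∀ c₀ ∈ done, ColumnLT c₀ col :=
      fun c₀ h₀ => List.pairwise_append.mp hpair |>.2.2 c₀ h₀ col (by simp)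
    have hqdone : ∀ c₀ ∈ qdone, col.length ≤ c₀.length := by
      intro c₀ h₀
      obtain ⟨c₁, h₁, hlen⟩ :=
        List.mem_map.mp (hq ▸ List.mem_map_of_mem (f := List.length) h₀)
      exact hlen ▸ (hdone c₁ h₁).1
    rw [List.flatMap_cons, RSKaux_reverse_append (hs col (by simp)) (rowsLT_ofColumns hdone),
      ← ofColumns_append_singleton _ _ fun c₀ h₀ => (hdone c₀ h₀).1,
      ← ofColumns_append_singleton _ _ (by simpa using hqdone),
      ih _ _ _ (fun c₀ h₀ => hs c₀ (by simp [h₀])) (by simpa using hpair) (by simp [hq])]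
    simp [consecutiveBlocks]

theorem RSK_flatMap_reverse {cols : List (List ℕ)} (hs : ∀ col ∈ cols, col.Pairwise (· < ·))
    (hpair : cols.Pairwise ColumnLT) :
    (RSK (cols.flatMap List.reverse)).2 =
      ofColumns (consecutiveBlocks 1 (cols.map List.length)) :=
  congrArg Prod.snd (RSKaux_flatMap_reverse cols [] [] 1 hs hpair rfl)

def column (S : List (List ℕ)) (j : ℕ) : List ℕ := S.filterMap (·[j]?)

lemma transposeTab_eq_map_column (T : List (List ℕ)) :
    transposeTab T = (List.range (T.headD []).length).map (column T) := rfl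

lemma columnWord_eq_flatMap_reverse (T : List (List ℕ)) :
    columnWord T = (transposeTab T).flatMap List.reverse := by
  simp [columnWord, transposeTab, List.flatMap_map, List.filterMap_reverse]

lemma length_column (S : List (List ℕ)) (j : ℕ) :
    (column S j).length = (shape S).countP (j < ·) := by
  rw [column, shape, List.length_filterMap_eq_countP, List.countP_map]
  exact List.countP_congr fun row _ => by simp

lemma map_length_transposeTab (S : List (List ℕ)) :
    (transposeTab S).map List.length = conj (shape S) := by
  have : (shape S).headD 0 = (S.headD []).length := by cases S <;> rfl
  rw [transposeTab_eq_map_column, conj, this, List.map_map]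
  exact List.map_congr_left fun j _ => length_column S j

section Columns

variable {S : List (List ℕ)}

lemma getElem?_column (hS : (shape S).Pairwise (· ≥ ·)) (i j : ℕ) :
    (column S j)[i]? = S[i]?.bind (·[j]?) := by
  induction S generalizing i with
  | nil => simp [column]
  | cons row S ih =>
    simp only [shape, List.map_cons, List.pairwise_cons, List.mem_map] at hS
    by_cases hj : j < row.length
    · cases i <;> simp [column, List.getElem?_eq_getElem hj, ← ih hS.2]
    · have hnone : ∀ r ∈ row :: S, r[j]? = none := by
        intro r hr
        rcases List.mem_cons.mp hr with rfl | hr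
        · simpa using hj
        · have := hS.1 r.length ⟨r, hr, rfl⟩
          simp; omega
      rw [column, List.filterMap_eq_nil_iff.mpr hnone]
      cases h : (row :: S)[i]? with
      | none => simp
      | some r => simp [hnone r (List.mem_of_getElem? h)]

lemma getD_getD_of_getElem?_column (hS : (shape S).Pairwise (· ≥ ·)) {i j x : ℕ}
    (h : (column S j)[i]? = some x) :
    i < S.length ∧ j < (S.getD i []).length ∧ (S.getD i []).getD j 0 = x := by
  rw [getElem?_column hS] at h
  obtain ⟨row, hrow, hx⟩ := Option.bind_eq_some_iff.mp h
  obtain ⟨hi, -⟩ := List.getElem?_eq_some_iff.mp hrow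
  obtain ⟨hj, -⟩ := List.getElem?_eq_some_iff.mp hx
  simp_all [List.getD_eq_getElem?_getD]

lemma pairwise_lt_column (hS : (shape S).Pairwise (· ≥ ·))
    (hcol : ∀ i j, i + 1 < S.length → j < (S.getD (i + 1) []).length →
      (S.getD i []).getD j 0 < (S.getD (i + 1) []).getD j 0) (j : ℕ) :
    (column S j).Pairwise (· < ·) := by
  rw [← List.isChain_iff_pairwise, List.isChain_iff_getElem]
  intro i hi
  obtain ⟨-, -, hx⟩ :=
    getD_getD_of_getElem?_column hS (List.getElem?_eq_getElem (Nat.lt_of_succ_lt hi))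
  obtain ⟨hi', hj, hy⟩ := getD_getD_of_getElem?_column hS (List.getElem?_eq_getElem hi)
  rw [← hx, ← hy]
  exact hcol i j hi' hj

lemma columnLT_column (hS : (shape S).Pairwise (· ≥ ·))
    (hrow : ∀ row ∈ S, row.Pairwise (· < ·)) {a b : ℕ} (hab : a < b) :
    ColumnLT (column S a) (column S b) := by
  have hlen : (column S b).length ≤ (column S a).length := by
    simp only [length_column]
    exact List.countP_mono_left fun x _ hx => by simp at hx ⊢; omega
  refine ⟨hlen, fun i hi => ?_⟩
  obtain ⟨hiS, -, hx⟩ :=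
    getD_getD_of_getElem?_column hS (List.getElem?_eq_getElem (hi.trans_le hlen))
  obtain ⟨-, hb, hy⟩ := getD_getD_of_getElem?_column hS (List.getElem?_eq_getElem hi)
  have hmem : S.getD i [] ∈ S := by
    rw [List.getD_eq_getElem _ _ hiS]
    exact List.getElem_mem hiS
  rw [List.getD_eq_getElem _ _ (hi.trans_le hlen), List.getD_eq_getElem _ _ hi, ← hx, ← hy,
    List.getD_eq_getElem _ _ hb, List.getD_eq_getElem _ _ (hab.trans hb)]
  exact List.pairwise_iff_getElem.mp (hrow _ hmem) a b _ hb hab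

lemma pairwise_lt_of_mem_transposeTab (hS : (shape S).Pairwise (· ≥ ·))
    (hcol : ∀ i j, i + 1 < S.length → j < (S.getD (i + 1) []).length →
      (S.getD i []).getD j 0 < (S.getD (i + 1) []).getD j 0) :
    ∀ col ∈ transposeTab S, col.Pairwise (· < ·) := by
  simpa [transposeTab_eq_map_column] using fun j _ => pairwise_lt_column hS hcol j

lemma pairwise_columnLT_transposeTab (hS : (shape S).Pairwise (· ≥ ·))
    (hrow : ∀ row ∈ S, row.Pairwise (· < ·)) : (transposeTab S).Pairwise ColumnLT := by
  rw [transposeTab_eq_map_column]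
  exact List.pairwise_map.mpr (List.pairwise_lt_range.imp (columnLT_column hS hrow))

end Columns

lemma consecutiveBlocks_eq (n : ℕ) (ks : List ℕ) :
    consecutiveBlocks n ks = (List.range ks.length).map
      (fun j => (List.range (ks.getD j 0)).map (fun i => (ks.take j).sum + i + n)) := by
  induction ks generalizing n with
  | nil => rfl
  | cons k ks ih =>
    rw [consecutiveBlocks, ih, List.length_cons, List.range_succ_eq_map, List.map_cons,
      List.map_map, List.range'_eq_map_range]
    congr 1
    · simp only [List.getD_cons_zero, List.take_zero, List.sum_nil]
      exact List.map_congr_left fun i _ => by omega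
    · refine List.map_congr_left fun j _ => List.map_congr_left fun i _ => ?_
      simp only [List.take_succ_cons, List.sum_cons]
      omega

lemma length_headD_consecutiveBlocks (n : ℕ) (ks : List ℕ) :
    ((consecutiveBlocks n ks).headD []).length = ks.headD 0 := by
  cases ks <;> simp [consecutiveBlocks]

lemma headD_conj {l : List ℕ} (hpos : ∀ x ∈ l, 0 < x) : (conj l).headD 0 = l.length := by
  cases l with
  | nil => rfl
  | cons x l =>
    obtain ⟨k, rfl⟩ : ∃ k, x = k + 1 := ⟨x - 1, by have := hpos x (by simp); omega⟩
    simp only [conj, List.headD_cons, List.range_succ_eq_map, List.map_cons]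
    exact List.countP_eq_length.mpr fun y hy => by simpa using hpos y hy

theorem ofColumns_consecutiveBlocks_conj {l : List ℕ} (hpos : ∀ x ∈ l, 0 < x) :
    ofColumns (consecutiveBlocks 1 (conj l)) = Qlam l := by
  rw [ofColumns, length_headD_consecutiveBlocks, headD_conj hpos, consecutiveBlocks_eq, Qlam]

end RSKPaper

open RSKPaper in
/-- The recording tableau of the column reading word of any SYT of shape `λ`
is the fixed tableau `Q_λ`, whose columns are filled consecutively with
`1,2,…,n` from bottom to top, left to right. -/
theorem recording_of_columnWord (S : List (List ℕ)) (lam : List ℕ)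
    (hS : IsSYT S) (hshape : shape S = lam) :
    (RSK (columnWord S)).2 = Qlam lam := by
  subst hshape
  obtain ⟨⟨hdec, hpos⟩, hrow, hcol, -⟩ := hS
  rw [columnWord_eq_flatMap_reverse,
    RSK_flatMap_reverse (pairwise_lt_of_mem_transposeTab hdec hcol)
      (pairwise_columnLT_transposeTab hdec hrow),
    map_length_transposeTab, ofColumns_consecutiveBlocks_conj hpos]
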